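/- Change-of-norm equivalence: let Σ and Σ̂ be positive self-adjoint operators on a Hilbert space H and μ ≥ 0 (with Σ + μI boundedly invertible). Then the inequality |‖h‖_n² − ‖h‖²_{L²}| ≤ (1/2)(‖h‖²_{L²} + μ‖h‖²) holds for all h ∈ H, where ‖h‖_n² = ⟨h, Σ̂ h⟩ and ‖h‖²_{L²} = ⟨h, Σ h⟩, if and only if ‖(Σ+μ)^{-1/2}(Σ̂−Σ)(Σ+μ)^{-1/2}‖_∞ ≤ 1/2. -/
import Mathlib

open scoped RealInnerProductSpace

/-- A self-adjoint operator whose quadratic form is bounded by `c‖x‖²` has norm at most `c`. -/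
lemma norm_le_of_quadform {H : Type*} [NormedAddCommGroup H] [InnerProductSpace ℝ H]
    [CompleteSpace H] (A : H →L[ℝ] H) (hA : IsSelfAdjoint A) (c : ℝ) (hc : 0 ≤ c)
    (h : ∀ x : H, |⟪x, A x⟫| ≤ c * ‖x‖ ^ 2) : ‖A‖ ≤ c := by
  apply ContinuousLinearMap.opNorm_le_bound _ hc
  intro y
  rcases eq_or_ne (A y) 0 with hy | hy
  · simp [hy]; positivity
  have hAy : (0:ℝ) < ‖A y‖ := norm_pos_iff.mpr hy
  have hy0 : y ≠ 0 := by rintro rfl; simp at hy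
  have hyn : (0:ℝ) < ‖y‖ := norm_pos_iff.mpr hy0
  set x : H := (‖y‖ / ‖A y‖) • A y with hx
  have hxn : ‖x‖ = ‖y‖ := by
    rw [hx, norm_smul]
    rw [Real.norm_eq_abs, abs_of_nonneg (by positivity)]
    field_simp
  have hsym : ∀ u v : H, ⟪u, A v⟫ = ⟪v, A u⟫ := by
    intro u v
    rw [real_inner_comm]
    exact hA.isSymmetric v u
  have hpol : ⟪x, A y⟫ = (1/4) * (⟪x + y, A (x + y)⟫ - ⟪x - y, A (x - y)⟫) := by
    simp only [map_add, map_sub, inner_add_left, inner_add_right, inner_sub_left,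
      inner_sub_right]
    rw [hsym y x]
    ring
  have hb : ⟪x, A y⟫ ≤ c * ‖y‖ ^ 2 := by
    rw [hpol]
    have h1 := (abs_le.mp (h (x + y))).2
    have h2 := (abs_le.mp (h (x - y))).1
    have hpar : ‖x + y‖ ^ 2 + ‖x - y‖ ^ 2 = 4 * ‖y‖ ^ 2 := by
      have := parallelogram_law_with_norm ℝ x y
      rw [hxn] at this
      nlinarith [this]
    have hc4 : c * ‖x + y‖ ^ 2 + c * ‖x - y‖ ^ 2 = 4 * (c * ‖y‖ ^ 2) := by
      have := congrArg (fun t => c * t) hpar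
      simp only [mul_add] at this
      linarith [this]
    linarith [h1, h2, hc4]
  have hval : ⟪x, A y⟫ = ‖y‖ * ‖A y‖ := by
    rw [hx, real_inner_smul_left, real_inner_self_eq_norm_sq]
    field_simp
  rw [hval] at hb
  nlinarith [hb, hyn, mul_pos hyn hAy]

/-- Change-of-norm equivalence: the two-sided comparison of the empirical and population
quadratic forms holds iff the normalized perturbation `(Σ+μ)^{-1/2}(Σ̂-Σ)(Σ+μ)^{-1/2}`
has operator norm at most `1/2`. Here `R` denotes the inverse square root of `Σ + μ I`. -/
theorem change_of_norm_equivalence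
    {H : Type*} [NormedAddCommGroup H] [InnerProductSpace ℝ H] [CompleteSpace H]
    (Sigma Sigmahat : H →L[ℝ] H)
    (hSym : IsSelfAdjoint Sigma) (hSymHat : IsSelfAdjoint Sigmahat)
    (hPos : ∀ x : H, 0 ≤ ⟪x, Sigma x⟫) (hPosHat : ∀ x : H, 0 ≤ ⟪x, Sigmahat x⟫)
    (μ : ℝ) (hμ : 0 ≤ μ)
    (R : H →L[ℝ] H) (hRsym : IsSelfAdjoint R) (hRpos : ∀ x : H, 0 ≤ ⟪x, R x⟫)
    (hRinv₁ : (R ∘L R) ∘L (Sigma + μ • (1 : H →L[ℝ] H)) = 1)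
    (hRinv₂ : (Sigma + μ • (1 : H →L[ℝ] H)) ∘L (R ∘L R) = 1) :
    (∀ h : H, |⟪h, Sigmahat h⟫ - ⟪h, Sigma h⟫|
        ≤ (1 / 2) * (⟪h, Sigma h⟫ + μ * ‖h‖ ^ 2))
      ↔ ‖R ∘L (Sigmahat - Sigma) ∘L R‖ ≤ 1 / 2 := by
  set T : H →L[ℝ] H := Sigma + μ • (1 : H →L[ℝ] H) with hT
  -- RTR = 1
  have h1 : R * (R * T) = 1 := by
    rw [← mul_assoc]; exact hRinv₁
  have h2 : (T * R) * R = 1 := by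
    rw [mul_assoc]; exact hRinv₂
  have hcomm : T * R = R * T := left_inv_eq_right_inv h2 h1
  have hRTR : (R * T) * R = 1 := by rw [← hcomm]; exact h2
  have hRTRapp : ∀ x : H, R (T (R x)) = x := by
    intro x
    have := ContinuousLinearMap.ext_iff.mp hRTR x
    simpa [ContinuousLinearMap.mul_apply] using this
  have hRS : ∀ u v : H, ⟪u, R v⟫ = ⟪R u, v⟫ := fun u v => (hRsym.isSymmetric u v).symm
  have hTapp : ∀ h : H, ⟪h, T h⟫ = ⟪h, Sigma h⟫ + μ * ‖h‖ ^ 2 := by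
    intro h
    simp [hT, ContinuousLinearMap.add_apply, ContinuousLinearMap.smul_apply,
      ContinuousLinearMap.one_apply, inner_add_right, real_inner_smul_right,
      real_inner_self_eq_norm_sq]
  have hkey : ∀ x : H, ⟪R x, Sigma (R x)⟫ + μ * ‖R x‖ ^ 2 = ‖x‖ ^ 2 := by
    intro x
    rw [← hTapp, ← hRS, hRTRapp, real_inner_self_eq_norm_sq]
  have hEapp : ∀ x : H, (R ∘L (Sigmahat - Sigma) ∘L R) x = R ((Sigmahat - Sigma) (R x)) := by
    intro x; rfl
  have he : ∀ x : H, ⟪x, (R ∘L (Sigmahat - Sigma) ∘L R) x⟫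
      = ⟪R x, Sigmahat (R x)⟫ - ⟪R x, Sigma (R x)⟫ := by
    intro x
    rw [hEapp, hRS x ((Sigmahat - Sigma) (R x))]
    simp [ContinuousLinearMap.sub_apply, inner_sub_right]
  constructor
  · intro hyp
    have hE : IsSelfAdjoint (Sigmahat - Sigma) := hSymHat.sub hSym
    have hA : IsSelfAdjoint (R ∘L (Sigmahat - Sigma) ∘L R) := by
      have hconj := hE.conjugate_self hRsym
      have : R * (Sigmahat - Sigma) * R = R ∘L (Sigmahat - Sigma) ∘L R := by
        rw [mul_assoc]; rfl
      rwa [this] at hconj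
    apply norm_le_of_quadform _ hA (1/2) (by norm_num)
    intro x
    rw [he]
    calc |⟪R x, Sigmahat (R x)⟫ - ⟪R x, Sigma (R x)⟫|
        ≤ (1/2) * (⟪R x, Sigma (R x)⟫ + μ * ‖R x‖ ^ 2) := hyp (R x)
      _ = (1/2) * ‖x‖ ^ 2 := by rw [hkey]
  · intro hb h
    set x : H := T (R h) with hxdef
    have hx : R x = h := hRTRapp h
    have e1 : ⟪h, Sigmahat h⟫ - ⟪h, Sigma h⟫ = ⟪x, (R ∘L (Sigmahat - Sigma) ∘L R) x⟫ := by
      rw [he, hx]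
    have e2 : ⟪h, Sigma h⟫ + μ * ‖h‖ ^ 2 = ‖x‖ ^ 2 := by
      rw [← hx, hkey]
    rw [e1, e2]
    calc |⟪x, (R ∘L (Sigmahat - Sigma) ∘L R) x⟫|
        ≤ ‖x‖ * ‖(R ∘L (Sigmahat - Sigma) ∘L R) x‖ := abs_real_inner_le_norm _ _
      _ ≤ ‖x‖ * (‖R ∘L (Sigmahat - Sigma) ∘L R‖ * ‖x‖) := by
          gcongr
          exact ContinuousLinearMap.le_opNorm _ _
      _ ≤ ‖x‖ * ((1/2) * ‖x‖) := by
          gcongr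
      _ = (1/2) * ‖x‖ ^ 2 := by ring
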